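/- For vectors u, v ∈ ℝ^n and r ≥ 1, the inner product ⟨|u|^(r-1)u - |v|^(r-1)v, u - v⟩ is at least (1/2)|u|^(r-1)|u-v|² + (1/2)|v|^(r-1)|u-v|²; in particular it is nonnegative. -/

import Mathlib

open scoped RealInnerProductSpace

/-! With `a = ‖u‖^(r-1)` and `b = ‖v‖^(r-1)`, the inner product equals
`(a + b)/2 ‖u - v‖² + (a - b)/2 (‖u‖² - ‖v‖²)`, and the second term is nonnegative because
`t ↦ t^(r-1)` and `t ↦ t²` are both monotone on `[0, ∞)`. -/

theorem real_inner_smul_sub_smul_sub_eq {E : Type*} [NormedAddCommGroup E] [InnerProductSpace ℝ E]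
    (a b : ℝ) (u v : E) :
    ⟪a • u - b • v, u - v⟫ =
      (a + b) / 2 * ‖u - v‖ ^ 2 + (a - b) / 2 * (‖u‖ ^ 2 - ‖v‖ ^ 2) := by
  rw [norm_sub_sq_real]
  simp only [inner_sub_left, inner_sub_right, real_inner_smul_left,
    real_inner_self_eq_norm_sq, real_inner_comm v u]
  ring

theorem Real.rpow_sub_rpow_mul_sq_sub_sq_nonneg {x y p : ℝ} (hx : 0 ≤ x) (hy : 0 ≤ y)
    (hp : 0 ≤ p) : 0 ≤ (x ^ p - y ^ p) * (x ^ 2 - y ^ 2) := by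
  rcases le_total x y with hxy | hyx
  · exact mul_nonneg_of_nonpos_of_nonpos
      (sub_nonpos.mpr (Real.rpow_le_rpow hx hxy hp))
      (sub_nonpos.mpr (pow_le_pow_left₀ hx hxy 2))
  · exact mul_nonneg
      (sub_nonneg.mpr (Real.rpow_le_rpow hy hyx hp))
      (sub_nonneg.mpr (pow_le_pow_left₀ hy hyx 2))

/-- Monotonicity of the Forchheimer nonlinearity: for u, v ∈ ℝⁿ and r ≥ 1,
`⟨|u|^(r-1)u - |v|^(r-1)v, u - v⟩ ≥ (1/2)|u|^(r-1)|u-v|² + (1/2)|v|^(r-1)|u-v|²`. -/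
theorem stmt1 (n : ℕ) (r : ℝ) (hr : 1 ≤ r) (u v : EuclideanSpace ℝ (Fin n)) :
    (1/2) * ‖u‖ ^ (r - 1) * ‖u - v‖ ^ 2 + (1/2) * ‖v‖ ^ (r - 1) * ‖u - v‖ ^ 2 ≤
      ⟪(‖u‖ ^ (r - 1)) • u - (‖v‖ ^ (r - 1)) • v, u - v⟫ := by
  have hmono := Real.rpow_sub_rpow_mul_sq_sub_sq_nonneg (norm_nonneg u) (norm_nonneg v)
    (sub_nonneg.mpr hr)
  rw [real_inner_smul_sub_smul_sub_eq]
  linarith
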